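/- There exist a finite p-group S, two distinct saturated fusion systems F and G over S, a normal subsystem E of both F and G over some T ≤ S, and a subsystem D normal in both N_F(T) and N_G(T), such that the product (ED)_F = F and (ED)_G = G. Hence the product subsystem ED depends on the ambient fusion system and not only on E and D. -/

import Mathlib

universe u v
open scoped Classical
/-- A fusion system on the finite `p`-group `S`, over its "support" subgroup `T`.
Morphisms on a subgroup `P ≤ T` are represented as functions `S → S` that are
injective group homomorphisms on `P` with values in `T`; membership in `Hom P`
only depends on the restriction to `P`. -/
structure FusionSystem (S : Type v) [Group S] where
  T : Subgroup S
  Hom : Subgroup S → Set (S → S)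
  mor_spec : ∀ P : Subgroup S, ∀ f ∈ Hom P, P ≤ T ∧ Set.InjOn f P ∧
    (∀ x ∈ P, f x ∈ T) ∧ ∀ x ∈ P, ∀ y ∈ P, f (x * y) = f x * f y
  ext_mem : ∀ P : Subgroup S, ∀ f ∈ Hom P, ∀ g : S → S,
    (∀ x ∈ P, g x = f x) → g ∈ Hom P
  id_mem : ∀ P : Subgroup S, P ≤ T → id ∈ Hom P
  conj_mem : ∀ t ∈ T, ∀ P : Subgroup S, P ≤ T → (fun x => t⁻¹ * x * t) ∈ Hom P
  comp_mem : ∀ P Q : Subgroup S, ∀ f ∈ Hom P, ∀ g ∈ Hom Q, (∀ x ∈ P, f x ∈ Q) →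
    (fun x => g (f x)) ∈ Hom P
  restrict_mem : ∀ P Q : Subgroup S, Q ≤ P → ∀ f ∈ Hom P, f ∈ Hom Q
  inv_mem : ∀ P Q : Subgroup S, ∀ f ∈ Hom P, (∀ x ∈ P, f x ∈ Q) →
    (∀ y ∈ Q, ∃ x ∈ P, f x = y) → ∃ g ∈ Hom Q, ∀ x ∈ P, g (f x) = x

namespace FusionSystem

variable {S : Type v} [Group S]

/-- `f` is an `F`-isomorphism from `P` onto `Q`. -/
def IsMorIso (F : FusionSystem S) (P Q : Subgroup S) (f : S → S) : Prop :=
  f ∈ F.Hom P ∧ (∀ x ∈ P, f x ∈ Q) ∧ ∀ y ∈ Q, ∃ x ∈ P, f x = y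

/-- `P` and `Q` are `F`-conjugate. -/
def IsConjSub (F : FusionSystem S) (P Q : Subgroup S) : Prop :=
  ∃ f, F.IsMorIso P Q f

/-- `E` is a subsystem of `F`. -/
def IsSubsystemOf (E F : FusionSystem S) : Prop :=
  E.T ≤ F.T ∧ ∀ P f, f ∈ E.Hom P → f ∈ F.Hom P

/-- Equality of fusion systems (extensional). -/
def FEq (E F : FusionSystem S) : Prop :=
  E.T = F.T ∧ ∀ P f, f ∈ E.Hom P ↔ f ∈ F.Hom P

/-- `U` is strongly `F`-closed. -/
def StronglyClosed (F : FusionSystem S) (U : Subgroup S) : Prop :=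
  U ≤ F.T ∧ ∀ P : Subgroup S, ∀ f ∈ F.Hom P, ∀ x ∈ P, x ∈ U → f x ∈ U

/-- The normalizer `N_T(P)` inside the support. -/
def NT (F : FusionSystem S) (P : Subgroup S) : Subgroup S := Subgroup.normalizer (P : Set S) ⊓ F.T

/-- `P` is fully `F`-normalized. -/
def FullyNormalized (F : FusionSystem S) (P : Subgroup S) : Prop :=
  P ≤ F.T ∧ ∀ Q, F.IsConjSub P Q → Nat.card ↥(F.NT Q) ≤ Nat.card ↥(F.NT P)

/-- Canonical representatives of the elements of `Aut_F(P)`. -/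
def autRes (F : FusionSystem S) (P : Subgroup S) : Set (S → S) :=
  {g | ∃ f ∈ F.Hom P, (∀ x ∈ P, f x ∈ P) ∧ g = fun x => if x ∈ P then f x else 1}

/-- Canonical representatives of the elements of `Aut_{N_T(P)}(P)` (conjugations). -/
def autSRes (F : FusionSystem S) (P : Subgroup S) : Set (S → S) :=
  {g | ∃ t ∈ F.NT P, g = fun x => if x ∈ P then t⁻¹ * x * t else 1}

/-- Canonical representatives of `Inn(P)`. -/
def innRes (F : FusionSystem S) (P : Subgroup S) : Set (S → S) :=
  {g | ∃ t ∈ P, g = fun x => if x ∈ P then t⁻¹ * x * t else 1}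

/-- `P` is fully automized: `Aut_S(P)` is a Sylow `p`-subgroup of `Aut_F(P)`. -/
def FullyAutomized (F : FusionSystem S) (p : ℕ) (P : Subgroup S) : Prop :=
  (∃ k, Nat.card ↥(F.autSRes P) = p ^ k) ∧
  ¬ p ∣ Nat.card ↥(F.autRes P) / Nat.card ↥(F.autSRes P)

/-- The group `N_φ` for an isomorphism `f : Q → P`. -/
def Nphi (F : FusionSystem S) (P Q : Subgroup S) (f : S → S) : Set S :=
  {g | g ∈ F.NT Q ∧ ∃ h ∈ F.NT P, ∀ x ∈ Q, f (g⁻¹ * x * g) = h⁻¹ * f x * h}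

/-- `P` is receptive: every isomorphism onto `P` extends to `N_φ`. -/
def Receptive (F : FusionSystem S) (P : Subgroup S) : Prop :=
  ∀ Q : Subgroup S, ∀ f, F.IsMorIso Q P f →
    ∃ fbar ∈ F.Hom (Subgroup.closure (F.Nphi P Q f)), ∀ x ∈ Q, fbar x = f x

/-- `F` is saturated: the support is a `p`-group and every fully normalized
subgroup is fully automized and receptive. -/
def IsSaturated (F : FusionSystem S) (p : ℕ) : Prop :=
  IsPGroup p F.T ∧ ∀ P : Subgroup S, P ≤ F.T → F.FullyNormalized P →
    F.FullyAutomized p P ∧ F.Receptive P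

/-- `P'` is the image of `P` under the function `a`. -/
def MapImage (a : S → S) (P P' : Subgroup S) : Prop :=
  (P' : Set S) = a '' (P : Set S)

/-- `E` is a normal subsystem of `F` in the sense of Aschbacher: a saturated,
`F`-invariant subsystem over a strongly closed subgroup satisfying the Frattini
and extension conditions. -/
def IsNormal (E F : FusionSystem S) (p : ℕ) : Prop :=
  E.IsSubsystemOf F ∧ F.StronglyClosed E.T ∧ E.IsSaturated p ∧
  (∀ P Q : Subgroup S, P ≤ Q → Q ≤ E.T → ∀ f ∈ E.Hom P, (∀ x ∈ P, f x ∈ Q) →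
    ∀ a ∈ F.Hom Q, ∀ P' : Subgroup S, MapImage a P P' →
      ∃ g ∈ E.Hom P', ∀ x ∈ P, g (a x) = a (f x)) ∧
  (∀ P : Subgroup S, P ≤ E.T → ∀ f ∈ F.Hom P, (∀ x ∈ P, f x ∈ E.T) →
    ∃ φ ∈ E.Hom P, ∃ a, F.IsMorIso E.T E.T a ∧ ∀ x ∈ P, f x = a (φ x)) ∧
  (∀ f, E.IsMorIso E.T E.T f →
    ∃ fbar ∈ F.Hom (E.T ⊔ (Subgroup.centralizer (E.T : Set S) ⊓ F.T)),
      (∀ x ∈ E.T, fbar x = f x) ∧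
      ∀ c ∈ Subgroup.centralizer (E.T : Set S) ⊓ F.T,
        fbar c * c⁻¹ ∈ Subgroup.centralizer (E.T : Set S) ⊓ E.T)

/-- `E` is a subnormal subsystem of `F`. -/
def IsSubnormal (E F : FusionSystem S) (p : ℕ) : Prop :=
  Relation.ReflTransGen (fun A B => IsNormal A B p) E F

/-- Specification of the morphisms of the normalizer subsystem `N_F(U)`:
morphisms defined on subgroups of `N_{F.T}(U)` extending to `F`-morphisms
defined on an overgroup containing `U` and mapping `U` onto `U`. -/
def NormHomSpec (F : FusionSystem S) (U P : Subgroup S) (f : S → S) : Prop :=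
  P ≤ Subgroup.normalizer (U : Set S) ⊓ F.T ∧
  ∃ P' : Subgroup S, ∃ g ∈ F.Hom P', P ≤ P' ∧ U ≤ P' ∧
    (∀ x ∈ U, g x ∈ U) ∧ (∀ y ∈ U, ∃ x ∈ U, g x = y) ∧ ∀ x ∈ P, f x = g x

/-- `M` is the normalizer subsystem `N_F(U)`. -/
def IsNormalizerSystem (F : FusionSystem S) (U : Subgroup S) (M : FusionSystem S) : Prop :=
  M.T = Subgroup.normalizer (U : Set S) ⊓ F.T ∧ ∀ P f, f ∈ M.Hom P ↔ F.NormHomSpec U P f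

/-- `Q` is a normal subgroup of the fusion system `F`. -/
def IsNormalSubgroup (F : FusionSystem S) (Q : Subgroup S) : Prop :=
  Q ≤ F.T ∧ ∀ P : Subgroup S, ∀ f ∈ F.Hom P,
    ∃ g, g ∈ F.Hom (P ⊔ Q) ∧ (∀ x ∈ P, g x = f x) ∧ (∀ x ∈ Q, g x ∈ Q) ∧
      ∀ y ∈ Q, ∃ x ∈ Q, g x = y

/-- `O_p(F)` : the largest normal subgroup of `F`. -/
def Op (F : FusionSystem S) : Subgroup S :=
  ⨆ Q ∈ {Q : Subgroup S | F.IsNormalSubgroup Q}, Q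

/-- `P` is `F`-centric. -/
def IsCentric (F : FusionSystem S) (P : Subgroup S) : Prop :=
  P ≤ F.T ∧ ∀ Q, F.IsConjSub P Q → Subgroup.centralizer (Q : Set S) ⊓ F.T ≤ Q

/-- Composition of canonical automorphism representatives. -/
noncomputable def compRes (P : Subgroup S) (f g : S → S) : S → S :=
  fun x => if x ∈ P then g (f x) else 1

/-- `P` is `F`-radical: `O_p(Out_F(P)) = 1`, expressed via normal subgroups of
`Aut_F(P)` containing `Inn(P)` with `p`-power index over `Inn(P)`. -/
def IsRadical (F : FusionSystem S) (p : ℕ) (P : Subgroup S) : Prop :=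
  ∀ A : Set (S → S), F.innRes P ⊆ A → A ⊆ F.autRes P →
    (∀ a ∈ A, ∀ b ∈ A, compRes P a b ∈ A) →
    (∀ a ∈ A, ∀ b ∈ F.autRes P, ∀ bi ∈ F.autRes P, (∀ x ∈ P, bi (b x) = x) →
      compRes P (compRes P bi a) b ∈ A) →
    (∃ k, Nat.card ↥A / Nat.card ↥(F.innRes P) = p ^ k) → A ⊆ F.innRes P

/-- `P` is `F`-subcentric: for every fully normalized `F`-conjugate `Q` of `P`,
`O_p(N_F(Q))` is `F`-centric. -/
def IsSubcentric (F : FusionSystem S) (p : ℕ) (P : Subgroup S) : Prop :=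
  P ≤ F.T ∧ ∀ Q, F.IsConjSub P Q → F.FullyNormalized Q →
    ∀ M : FusionSystem S, F.IsNormalizerSystem Q M → F.IsCentric (Op M)

/-- The center `Z(F)`. -/
def center (F : FusionSystem S) : Subgroup S :=
  ⨆ Z ∈ {Z : Subgroup S | Z ≤ F.T ∧ Z ≤ Subgroup.centralizer (F.T : Set S) ∧
    ∀ P : Subgroup S, ∀ f ∈ F.Hom P, ∃ g ∈ F.Hom (P ⊔ Z),
      (∀ x ∈ P, g x = f x) ∧ ∀ z ∈ Z, g z = z}, Z

/-- `F` is quasisimple: saturated, noncentral, and every proper normal subsystem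
is central. -/
def IsQuasisimple (F : FusionSystem S) (p : ℕ) : Prop :=
  F.IsSaturated p ∧ ¬ F.T ≤ F.center ∧
  ∀ E : FusionSystem S, IsNormal E F p → E.T = F.T ∨ E.T ≤ F.center

/-- `C` is a component of `F`: a subnormal quasisimple subsystem. -/
def IsComponent (F C : FusionSystem S) (p : ℕ) : Prop :=
  IsSubnormal C F p ∧ C.IsQuasisimple p

/-- The support `S ∩ E(F)` of the layer of `F`. -/
def layerSupport (F : FusionSystem S) (p : ℕ) : Subgroup S :=
  ⨆ C ∈ {C : FusionSystem S | IsComponent F C p}, C.T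

/-- The support `S ∩ F*(F)` of the generalized Fitting subsystem of `F`. -/
def FstarSupport (F : FusionSystem S) (p : ℕ) : Subgroup S :=
  F.layerSupport p ⊔ F.Op

/-- The set `δ(F) = {P ≤ S : P ∩ F*(F) ∈ F^s}`. -/
def delta (F : FusionSystem S) (p : ℕ) : Set (Subgroup S) :=
  {P | P ≤ F.T ∧ F.IsSubcentric p (P ⊓ F.FstarSupport p)}

/-- `ED` is the product of the normal subsystem `E` (over `T`) of `F` and the
subnormal subsystem `D` of `N_F(T)`: the smallest subnormal subsystem of `F`
containing `E` as a normal subsystem and `D` as a subnormal subsystem of its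
`T`-normalizer, over `T·(S ∩ D)`. -/
def IsProductSystem (F E D : FusionSystem S) (T : Subgroup S) (p : ℕ)
    (ED : FusionSystem S) : Prop :=
  IsSubnormal ED F p ∧ ED.T = T ⊔ D.T ∧ IsNormal E ED p ∧
  (∀ M : FusionSystem S, IsNormalizerSystem ED T M → IsSubnormal D M p) ∧
  ∀ X : FusionSystem S, IsSubnormal X F p → IsNormal E X p →
    (∀ M : FusionSystem S, IsNormalizerSystem X T M → IsSubnormal D M p) →
    IsSubnormal ED X p

end FusionSystem

/-! Take `S = (ℤ/3)²`, `T = {(a, 0)}` and the involutions `α (a, b) = (-a, b)` and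
`β (a, b) = (b - a, b)`: both invert `T` and act trivially on `S / T`, and they differ.
A fusion system generated by a single involution over an abelian group of odd order is
saturated, because `Aut_S(P) = 1` and `|Aut_F(P)| ≤ 2` for every `P`. Such a system on `T₁` is
normal in one on `T₂ ≥ T₁` as soon as its involution, restricted to `T₁`, is the restriction of
`1` or of the ambient involution and that one acts trivially on `T₂ / T₁`; this makes the
inversion system `E` on `T` normal in both `F = ⟨α⟩` and `G = ⟨β⟩`, and `D = F_S(S)` normal
in both.
For the minimality of `F` in `(ED)_F`: if `E ⊴ X` and `D` is subnormal in `N_X(T)`, then `X`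
lives on all of `S`; the extension axiom of `E ⊴ X` extends the inversion of `T` to an
`X`-automorphism of `S`, which is a morphism of `F` other than the identity, hence `α`, so
`X = F`. The same argument gives `(ED)_G = G`. -/

open Function Set

namespace FusionSystem

section Group

variable {S : Type v} [Group S]

theorem IsSubsystemOf.antisymm {E F : FusionSystem S} (hEF : E.IsSubsystemOf F)
    (hFE : F.IsSubsystemOf E) : E = F := by
  rcases E with ⟨T₁, Hom₁⟩
  rcases F with ⟨T₂, Hom₂⟩
  obtain rfl : T₁ = T₂ := le_antisymm hEF.1 hFE.1
  obtain rfl : Hom₁ = Hom₂ := funext fun P => Set.ext fun f => ⟨hEF.2 P f, hFE.2 P f⟩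
  rfl

theorem IsSubnormal.isSubsystemOf {E F : FusionSystem S} {p : ℕ} (h : IsSubnormal E F p) :
    E.IsSubsystemOf F := by
  induction h with
  | refl => exact ⟨le_rfl, fun _ _ hf => hf⟩
  | tail _ hXY ih => exact ⟨ih.1.trans hXY.1.1, fun P f hf => hXY.1.2 P f (ih.2 P f hf)⟩

theorem IsNormalizerSystem.unique {X M₁ M₂ : FusionSystem S} {U : Subgroup S}
    (h₁ : X.IsNormalizerSystem U M₁) (h₂ : X.IsNormalizerSystem U M₂) : M₁ = M₂ :=
  IsSubsystemOf.antisymm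
    ⟨(h₁.1.trans h₂.1.symm).le, fun P f hf => (h₂.2 P f).2 ((h₁.2 P f).1 hf)⟩
    ⟨(h₂.1.trans h₁.1.symm).le, fun P f hf => (h₁.2 P f).2 ((h₂.2 P f).1 hf)⟩

abbrev idOr (α : S →* S) : Set (S →* S) := {MonoidHom.id S, α}

section IdOr

variable {α : S →* S}

theorem involutive_of_mem_idOr (hα : Involutive α) {φ : S →* S} (hφ : φ ∈ idOr α) :
    Involutive φ := by
  rcases hφ with rfl | rfl
  exacts [fun _ => rfl, hα]

theorem mapsTo_of_mem_idOr {H : Subgroup S} (hH : ∀ x ∈ H, α x ∈ H) {φ : S →* S}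
    (hφ : φ ∈ idOr α) : MapsTo φ H H := by
  rcases hφ with rfl | rfl
  exacts [fun _ hx => hx, hH]

theorem surjOn_of_mem_idOr (hα : Involutive α) {H : Subgroup S} (hH : ∀ x ∈ H, α x ∈ H)
    {φ : S →* S} (hφ : φ ∈ idOr α) : SurjOn φ H H :=
  fun y hy => ⟨φ y, mapsTo_of_mem_idOr hH hφ hy, involutive_of_mem_idOr hα hφ y⟩

theorem exists_comp_mem_idOr (hα : Involutive α) {φ ψ : S →* S} (hφ : φ ∈ idOr α)
    (hψ : ψ ∈ idOr α) : ∃ χ ∈ idOr α, ∀ x, ψ (φ x) = χ x := by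
  rcases hφ with rfl | rfl <;> rcases hψ with rfl | rfl
  exacts [⟨_, .inl rfl, fun _ => rfl⟩, ⟨_, .inr rfl, fun _ => rfl⟩,
    ⟨_, .inr rfl, fun _ => rfl⟩, ⟨_, .inl rfl, hα⟩]

theorem comm_of_mem_idOr {φ ψ : S →* S} (hφ : φ ∈ idOr α) (hψ : ψ ∈ idOr α) (x : S) :
    φ (ψ x) = ψ (φ x) := by
  rcases hφ with rfl | rfl <;> rcases hψ with rfl | rfl <;> rfl

end IdOr

end Group

section CommGroup

variable {S : Type v} [CommGroup S]

theorem centralizer_eq_top_of_comm (s : Set S) : Subgroup.centralizer s = ⊤ :=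
  eq_top_iff.mpr fun x _ => Subgroup.mem_centralizer_iff.mpr fun g _ => mul_comm g x

theorem mapsTo_sup_of_map_mul {g : S → S} {P Q U V : Subgroup S}
    (hg : ∀ x ∈ P, ∀ y ∈ U, g (x * y) = g x * g y) (hP : MapsTo g P Q) (hU : MapsTo g U V) :
    MapsTo g (P ⊔ U : Subgroup S) (Q ⊔ V : Subgroup S) := by
  intro z hz
  obtain ⟨x, hx, y, hy, rfl⟩ := Subgroup.mem_sup.mp hz
  rw [hg x hx y hy]
  exact mul_mem (Subgroup.mem_sup_left (hP hx)) (Subgroup.mem_sup_right (hU hy))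

theorem surjOn_sup_of_map_mul {g : S → S} {P Q U V : Subgroup S}
    (hg : ∀ x ∈ P, ∀ y ∈ U, g (x * y) = g x * g y) (hP : SurjOn g P Q) (hU : SurjOn g U V) :
    SurjOn g (P ⊔ U : Subgroup S) (Q ⊔ V : Subgroup S) := by
  intro z hz
  obtain ⟨y, hy, v, hv, rfl⟩ := Subgroup.mem_sup.mp hz
  obtain ⟨x, hx, rfl⟩ := hP hy
  obtain ⟨u, hu, rfl⟩ := hU hv
  exact ⟨x * u, mul_mem (Subgroup.mem_sup_left hx) (Subgroup.mem_sup_right hu), hg x hx u hu⟩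

theorem normHomSpec_iff {X : FusionSystem S} {U P : Subgroup S} {f : S → S} :
    X.NormHomSpec U P f ↔
      ∃ g ∈ X.Hom (P ⊔ U), MapsTo g U U ∧ SurjOn g U U ∧ ∀ x ∈ P, f x = g x := by
  constructor
  · rintro ⟨-, P', g, hg, hPP', hUP', hgU, hgUs, hfg⟩
    exact ⟨g, X.restrict_mem P' _ (sup_le hPP' hUP') g hg, hgU, hgUs, hfg⟩
  · rintro ⟨g, hg, hgU, hgUs, hfg⟩
    refine ⟨?_, P ⊔ U, g, hg, le_sup_left, le_sup_right, hgU, hgUs, hfg⟩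
    rw [Subgroup.normalizer_eq_top, top_inf_eq]
    exact le_sup_left.trans (X.mor_spec _ g hg).1

def normalizerSystem (X : FusionSystem S) (U : Subgroup S) (hU : U ≤ X.T) : FusionSystem S where
  T := Subgroup.normalizer (U : Set S) ⊓ X.T
  Hom P := {f | X.NormHomSpec U P f}
  mor_spec P f hf := by
    obtain ⟨g, hg, -, -, hfg⟩ := normHomSpec_iff.mp hf
    obtain ⟨-, hinj, hmaps, hmul⟩ := X.mor_spec _ g hg
    refine ⟨hf.1, fun x hx y hy hxy => ?_, fun x hx => ?_, fun x hx y hy => ?_⟩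
    · rw [hfg x hx, hfg y hy] at hxy
      exact hinj (Subgroup.mem_sup_left hx) (Subgroup.mem_sup_left hy) hxy
    · rw [hfg x hx, Subgroup.normalizer_eq_top, top_inf_eq]
      exact hmaps x (Subgroup.mem_sup_left hx)
    · rw [hfg x hx, hfg y hy, hfg _ (mul_mem hx hy)]
      exact hmul x (Subgroup.mem_sup_left hx) y (Subgroup.mem_sup_left hy)
  ext_mem P f hf g hgf := by
    obtain ⟨f', hf', hf'U, hf'Us, hff'⟩ := normHomSpec_iff.mp hf
    exact normHomSpec_iff.mpr ⟨f', hf', hf'U, hf'Us, fun x hx => (hgf x hx).trans (hff' x hx)⟩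
  id_mem P hP := normHomSpec_iff.mpr ⟨id, X.id_mem _ (sup_le (hP.trans inf_le_right) hU),
    fun _ hx => hx, fun y hy => ⟨y, hy, rfl⟩, fun _ _ => rfl⟩
  conj_mem t _ P hP := normHomSpec_iff.mpr ⟨id, X.id_mem _ (sup_le (hP.trans inf_le_right) hU),
    fun _ hx => hx, fun y hy => ⟨y, hy, rfl⟩, fun x _ => by simp⟩
  comp_mem P Q f hf g hg hfQ := by
    obtain ⟨f', hf', hf'U, hf'Us, hff'⟩ := normHomSpec_iff.mp hf
    obtain ⟨g', hg', hg'U, hg'Us, hgg'⟩ := normHomSpec_iff.mp hg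
    have hmaps : MapsTo f' (P ⊔ U : Subgroup S) (Q ⊔ U : Subgroup S) :=
      mapsTo_sup_of_map_mul
        (fun x hx y hy => (X.mor_spec _ f' hf').2.2.2 x (Subgroup.mem_sup_left hx) y
          (Subgroup.mem_sup_right hy))
        (fun x hx => hff' x hx ▸ hfQ x hx) hf'U
    refine normHomSpec_iff.mpr ⟨fun x => g' (f' x), X.comp_mem _ _ f' hf' g' hg' hmaps,
      hg'U.comp hf'U, hg'Us.comp hf'Us, fun x hx => ?_⟩
    rw [hgg' _ (hfQ x hx), hff' x hx]
  restrict_mem P Q hQP f hf := by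
    obtain ⟨g, hg, hgU, hgUs, hfg⟩ := normHomSpec_iff.mp hf
    exact normHomSpec_iff.mpr ⟨g, X.restrict_mem _ _ (sup_le_sup_right hQP U) g hg, hgU, hgUs,
      fun x hx => hfg x (hQP hx)⟩
  inv_mem P Q f hf hfQ hQf := by
    obtain ⟨g, hg, hgU, hgUs, hfg⟩ := normHomSpec_iff.mp hf
    have hmul : ∀ x ∈ P, ∀ y ∈ U, g (x * y) = g x * g y := fun x hx y hy =>
      (X.mor_spec _ g hg).2.2.2 x (Subgroup.mem_sup_left hx) y (Subgroup.mem_sup_right hy)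
    have hmaps := mapsTo_sup_of_map_mul hmul (fun x hx => hfg x hx ▸ hfQ x hx) hgU
    have hsurj := surjOn_sup_of_map_mul hmul (fun y hy => by
      obtain ⟨x, hx, rfl⟩ := hQf y hy
      exact ⟨x, hx, (hfg x hx).symm⟩) hgUs
    obtain ⟨h, hh, hhg⟩ := X.inv_mem _ _ g hg hmaps hsurj
    have hhgU : ∀ x ∈ U, h (g x) = x := fun x hx => hhg x (Subgroup.mem_sup_right hx)
    refine ⟨h, normHomSpec_iff.mpr ⟨h, hh, ?_, ?_, fun _ _ => rfl⟩,
      fun x hx => by rw [hfg x hx]; exact hhg x (Subgroup.mem_sup_left hx)⟩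
    · rintro _ hy
      obtain ⟨x, hx, rfl⟩ := hgUs hy
      rwa [hhgU x hx]
    · intro x hx
      exact ⟨g x, hgU hx, hhgU x hx⟩

theorem isNormalizerSystem_normalizerSystem (X : FusionSystem S) (U : Subgroup S)
    (hU : U ≤ X.T) : X.IsNormalizerSystem U (normalizerSystem X U hU) :=
  ⟨rfl, fun _ _ => Iff.rfl⟩

end CommGroup

section Involution

variable {S : Type v} [CommGroup S]

def ofInvolution (T : Subgroup S) (α : S →* S) (hα : Involutive α) (hT : ∀ x ∈ T, α x ∈ T) :
    FusionSystem S where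
  T := T
  Hom P := {f | P ≤ T ∧ ∃ φ ∈ idOr α, ∀ x ∈ P, f x = φ x}
  mor_spec := by
    rintro P f ⟨hPT, φ, hφ, hfφ⟩
    refine ⟨hPT, fun x hx y hy hxy => ?_, fun x hx => ?_, fun x hx y hy => ?_⟩
    · rw [hfφ x hx, hfφ y hy] at hxy
      exact (involutive_of_mem_idOr hα hφ).injective hxy
    · rw [hfφ x hx]
      exact mapsTo_of_mem_idOr hT hφ (hPT hx)
    · rw [hfφ x hx, hfφ y hy, hfφ _ (mul_mem hx hy), map_mul]
  ext_mem := by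
    rintro P f ⟨hPT, φ, hφ, hfφ⟩ g hgf
    exact ⟨hPT, φ, hφ, fun x hx => (hgf x hx).trans (hfφ x hx)⟩
  id_mem P hP := ⟨hP, _, .inl rfl, fun _ _ => rfl⟩
  conj_mem t _ P hP := ⟨hP, _, .inl rfl, fun x _ => by simp⟩
  comp_mem := by
    rintro P Q f ⟨hPT, φ, hφ, hfφ⟩ g ⟨-, ψ, hψ, hgψ⟩ hfQ
    obtain ⟨χ, hχ, hψφ⟩ := exists_comp_mem_idOr hα hφ hψ
    exact ⟨hPT, χ, hχ, fun x hx => (hgψ _ (hfQ x hx)).trans (by rw [hfφ x hx, hψφ])⟩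
  restrict_mem := by
    rintro P Q hQP f ⟨hPT, φ, hφ, hfφ⟩
    exact ⟨hQP.trans hPT, φ, hφ, fun x hx => hfφ x (hQP hx)⟩
  inv_mem := by
    rintro P Q f ⟨hPT, φ, hφ, hfφ⟩ - hQf
    refine ⟨φ, ⟨fun y hy => ?_, φ, hφ, fun _ _ => rfl⟩, fun x hx => ?_⟩
    · obtain ⟨x, hx, rfl⟩ := hQf y hy
      rw [hfφ x hx]
      exact mapsTo_of_mem_idOr hT hφ (hPT hx)
    · rw [hfφ x hx]
      exact involutive_of_mem_idOr hα hφ x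

theorem autSRes_eq_singleton (F : FusionSystem S) (P : Subgroup S) :
    F.autSRes P = {fun x => if x ∈ P then x else 1} := by
  ext g
  constructor
  · rintro ⟨t, -, rfl⟩
    simp
  · rintro rfl
    exact ⟨1, one_mem _, by simp⟩

variable {T : Subgroup S} {α : S →* S} (hα : Involutive α) (hT : ∀ x ∈ T, α x ∈ T)

theorem ofInvolution_autRes_subset (P : Subgroup S) :
    (ofInvolution T α hα hT).autRes P ⊆
      (fun φ : S →* S => fun x => if x ∈ P then φ x else 1) '' idOr α := by
  rintro _ ⟨f, ⟨-, φ, hφ, hfφ⟩, -, rfl⟩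
  refine ⟨φ, hφ, funext fun x => ?_⟩
  dsimp only
  split_ifs with hx
  exacts [(hfφ x hx).symm, rfl]

theorem ofInvolution_fullyAutomized {p : ℕ} (hp2 : 2 < p) {P : Subgroup S} (hPT : P ≤ T) :
    (ofInvolution T α hα hT).FullyAutomized p P := by
  have hS : Nat.card ((ofInvolution T α hα hT).autSRes P) = 1 := by
    rw [autSRes_eq_singleton, Nat.card_unique]
  have hsub := ofInvolution_autRes_subset hα hT P
  have hfin : ((ofInvolution T α hα hT).autRes P).Finite := (toFinite _).subset hsub
  have hpos : 0 < Nat.card ((ofInvolution T α hα hT).autRes P) := by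
    rw [Nat.card_coe_set_eq]
    exact (ncard_pos hfin).mpr ⟨_, id, ⟨hPT, _, .inl rfl, fun _ _ => rfl⟩, fun _ hx => hx, rfl⟩
  have hle : Nat.card ((ofInvolution T α hα hT).autRes P) ≤ 2 := by
    rw [Nat.card_coe_set_eq]
    calc _ ≤ _ := ncard_le_ncard hsub
      _ ≤ ncard (idOr α) := ncard_image_le
      _ ≤ 2 := (ncard_insert_le _ _).trans (by rw [ncard_singleton])
  refine ⟨⟨0, hS⟩, fun hdvd => ?_⟩
  rw [hS, Nat.div_one] at hdvd
  exact absurd (Nat.le_of_dvd hpos hdvd) (by omega)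

theorem ofInvolution_receptive (P : Subgroup S) : (ofInvolution T α hα hT).Receptive P := by
  rintro Q f ⟨⟨-, φ, hφ, hfφ⟩, -⟩
  refine ⟨φ, ⟨?_, φ, hφ, fun _ _ => rfl⟩, fun x hx => (hfφ x hx).symm⟩
  rw [Subgroup.closure_le]
  exact fun g hg => hg.1.2

theorem ofInvolution_isSaturated {p : ℕ} (hp : IsPGroup p T) (hp2 : 2 < p) :
    (ofInvolution T α hα hT).IsSaturated p :=
  ⟨hp, fun _ hPT _ => ⟨ofInvolution_fullyAutomized hα hT hp2 hPT, ofInvolution_receptive hα hT _⟩⟩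

end Involution

section Normality

variable {S : Type v} [CommGroup S] {T₁ T₂ : Subgroup S} {α₁ α₂ : S →* S}
  (hα₁ : Involutive α₁) (hT₁ : ∀ x ∈ T₁, α₁ x ∈ T₁)
  (hα₂ : Involutive α₂) (hT₂ : ∀ x ∈ T₂, α₂ x ∈ T₂)

theorem ofInvolution_isSubsystemOf {X : FusionSystem S} (hTX : T₁ ≤ X.T)
    (hαX : ⇑α₁ ∈ X.Hom T₁) : (ofInvolution T₁ α₁ hα₁ hT₁).IsSubsystemOf X := by
  refine ⟨hTX, ?_⟩
  rintro P f ⟨hPT, φ, hφ, hfφ⟩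
  rcases hφ with rfl | rfl
  · exact X.ext_mem P id (X.id_mem P (hPT.trans hTX)) f hfφ
  · exact X.ext_mem P φ (X.restrict_mem T₁ P hPT φ hαX) f hfφ

theorem exists_extension_of_mem_idOr
    (hext : ∃ ψ ∈ idOr α₂, (∀ x ∈ T₁, ψ x = α₁ x) ∧ ∀ c ∈ T₂, ψ c * c⁻¹ ∈ T₁)
    {φ : S →* S} (hφ : φ ∈ idOr α₁) :
    ∃ ψ ∈ idOr α₂, (∀ x ∈ T₁, ψ x = φ x) ∧ ∀ c ∈ T₂, ψ c * c⁻¹ ∈ T₁ := by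
  rcases hφ with rfl | rfl
  · exact ⟨_, .inl rfl, fun _ _ => rfl, fun c _ => by simp⟩
  · exact hext

theorem ofInvolution_stronglyClosed (hle : T₁ ≤ T₂) (hc : ∀ x ∈ T₁, α₂ x ∈ T₁) :
    (ofInvolution T₂ α₂ hα₂ hT₂).StronglyClosed T₁ := by
  refine ⟨hle, ?_⟩
  rintro P f ⟨-, ψ, hψ, hfψ⟩ x hx hxT
  rw [hfψ x hx]
  exact mapsTo_of_mem_idOr hc hψ hxT

theorem ofInvolution_invariant (hc : ∀ x ∈ T₁, α₂ x ∈ T₁)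
    (hext : ∃ ψ ∈ idOr α₂, (∀ x ∈ T₁, ψ x = α₁ x) ∧ ∀ c ∈ T₂, ψ c * c⁻¹ ∈ T₁) :
    ∀ P Q : Subgroup S, P ≤ Q → Q ≤ T₁ → ∀ f ∈ (ofInvolution T₁ α₁ hα₁ hT₁).Hom P,
      (∀ x ∈ P, f x ∈ Q) → ∀ a ∈ (ofInvolution T₂ α₂ hα₂ hT₂).Hom Q, ∀ P' : Subgroup S,
        MapImage a P P' →
          ∃ g ∈ (ofInvolution T₁ α₁ hα₁ hT₁).Hom P', ∀ x ∈ P, g (a x) = a (f x) := by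
  rintro P Q hPQ hQT f ⟨-, φ, hφ, hfφ⟩ hfQ a ⟨-, ψ, hψ, haψ⟩ P' hP'
  obtain ⟨φ₂, hφ₂, hφφ₂, -⟩ := exists_extension_of_mem_idOr hext hφ
  have hP'T : P' ≤ T₁ := by
    intro y hy
    rw [← SetLike.mem_coe, hP'] at hy
    obtain ⟨x, hx, rfl⟩ := hy
    rw [haψ x (hPQ hx)]
    exact mapsTo_of_mem_idOr hc hψ (hQT (hPQ hx))
  refine ⟨φ, ⟨hP'T, φ, hφ, fun _ _ => rfl⟩, fun x hx => ?_⟩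
  have hxT := hQT (hPQ hx)
  rw [haψ x (hPQ hx), haψ _ (hfQ x hx), hfφ x hx, ← hφφ₂ _ (mapsTo_of_mem_idOr hc hψ hxT),
    ← hφφ₂ x hxT, comm_of_mem_idOr hφ₂ hψ]

theorem ofInvolution_frattini (hle : T₁ ≤ T₂) (hc : ∀ x ∈ T₁, α₂ x ∈ T₁) :
    ∀ P : Subgroup S, P ≤ T₁ → ∀ f ∈ (ofInvolution T₂ α₂ hα₂ hT₂).Hom P, (∀ x ∈ P, f x ∈ T₁) →
      ∃ φ ∈ (ofInvolution T₁ α₁ hα₁ hT₁).Hom P, ∃ a,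
        (ofInvolution T₂ α₂ hα₂ hT₂).IsMorIso T₁ T₁ a ∧ ∀ x ∈ P, f x = a (φ x) := by
  rintro P hPT f ⟨-, ψ, hψ, hfψ⟩ -
  exact ⟨id, ⟨hPT, _, .inl rfl, fun _ _ => rfl⟩, ψ, ⟨⟨hle, ψ, hψ, fun _ _ => rfl⟩,
    mapsTo_of_mem_idOr hc hψ, surjOn_of_mem_idOr hα₂ hc hψ⟩, hfψ⟩

theorem ofInvolution_extension (hle : T₁ ≤ T₂)
    (hext : ∃ ψ ∈ idOr α₂, (∀ x ∈ T₁, ψ x = α₁ x) ∧ ∀ c ∈ T₂, ψ c * c⁻¹ ∈ T₁) :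
    ∀ f, (ofInvolution T₁ α₁ hα₁ hT₁).IsMorIso T₁ T₁ f →
      ∃ fbar ∈ (ofInvolution T₂ α₂ hα₂ hT₂).Hom (T₁ ⊔ (Subgroup.centralizer (T₁ : Set S) ⊓ T₂)),
        (∀ x ∈ T₁, fbar x = f x) ∧ ∀ c ∈ Subgroup.centralizer (T₁ : Set S) ⊓ T₂,
          fbar c * c⁻¹ ∈ Subgroup.centralizer (T₁ : Set S) ⊓ T₁ := by
  rintro f ⟨⟨-, φ, hφ, hfφ⟩, -⟩
  obtain ⟨ψ, hψ, hψφ, hψc⟩ := exists_extension_of_mem_idOr hext hφ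
  refine ⟨ψ, ⟨sup_le hle inf_le_right, ψ, hψ, fun _ _ => rfl⟩,
    fun x hx => (hψφ x hx).trans (hfφ x hx).symm, fun c hc => ⟨?_, hψc c hc.2⟩⟩
  rw [centralizer_eq_top_of_comm]
  trivial

theorem ofInvolution_isNormal {p : ℕ} (hp : IsPGroup p T₁) (hp2 : 2 < p) (hle : T₁ ≤ T₂)
    (hc : ∀ x ∈ T₁, α₂ x ∈ T₁)
    (hext : ∃ ψ ∈ idOr α₂, (∀ x ∈ T₁, ψ x = α₁ x) ∧ ∀ c ∈ T₂, ψ c * c⁻¹ ∈ T₁) :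
    IsNormal (ofInvolution T₁ α₁ hα₁ hT₁) (ofInvolution T₂ α₂ hα₂ hT₂) p := by
  have hαF : ⇑α₁ ∈ (ofInvolution T₂ α₂ hα₂ hT₂).Hom T₁ :=
    let ⟨ψ, hψ, hψα, _⟩ := hext
    ⟨hle, ψ, hψ, fun x hx => (hψα x hx).symm⟩
  exact ⟨ofInvolution_isSubsystemOf hα₁ hT₁ hle hαF, ofInvolution_stronglyClosed hα₂ hT₂ hle hc,
    ofInvolution_isSaturated hα₁ hT₁ hp hp2, ofInvolution_invariant hα₁ hT₁ hα₂ hT₂ hc hext,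
    ofInvolution_frattini hα₁ hT₁ hα₂ hT₂ hle hc, ofInvolution_extension hα₁ hT₁ hα₂ hT₂ hle hext⟩

end Normality

section TopInvolution

variable {S : Type v} [CommGroup S]

abbrev ofInvolutionTop (α : S →* S) (hα : Involutive α) : FusionSystem S :=
  ofInvolution ⊤ α hα fun _ _ => Subgroup.mem_top _

/-- `F_S(S)`: since `S` is abelian, its only morphisms are inclusions. -/
def trivialSystem (S : Type v) [CommGroup S] : FusionSystem S :=
  ofInvolutionTop (MonoidHom.id S) fun _ => rfl

def inversionSystem (T : Subgroup S) : FusionSystem S :=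
  ofInvolution T invMonoidHom inv_inv fun _ => T.inv_mem

variable {α : S →* S} (hα : Involutive α) {T : Subgroup S}

theorem ofInvolution_isNormalizerSystem_self (hT : ∀ x ∈ T, α x ∈ T) {U : Subgroup S}
    (hUT : U ≤ T) (hUα : ∀ x ∈ U, α x ∈ U) :
    (ofInvolution T α hα hT).IsNormalizerSystem U (ofInvolution T α hα hT) := by
  refine ⟨by rw [Subgroup.normalizer_eq_top, top_inf_eq], fun P f => ?_⟩
  rw [normHomSpec_iff]
  constructor
  · rintro ⟨hPT, φ, hφ, hfφ⟩
    exact ⟨φ, ⟨sup_le hPT hUT, φ, hφ, fun _ _ => rfl⟩, mapsTo_of_mem_idOr hUα hφ,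
      surjOn_of_mem_idOr hα hUα hφ, hfφ⟩
  · rintro ⟨g, hg, -, -, hfg⟩
    exact (ofInvolution T α hα hT).ext_mem P g
      ((ofInvolution T α hα hT).restrict_mem _ P le_sup_left g hg) f hfg

theorem trivialSystem_isNormal {p : ℕ} (hp : IsPGroup p S) (hp2 : 2 < p) :
    IsNormal (trivialSystem S) (ofInvolutionTop α hα) p :=
  ofInvolution_isNormal (fun _ => rfl) (fun _ _ => Subgroup.mem_top _) hα _ (hp.to_subgroup ⊤)
    hp2 le_rfl (fun _ _ => Subgroup.mem_top _)
    ⟨_, .inl rfl, fun _ _ => rfl, fun _ _ => Subgroup.mem_top _⟩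

theorem inversionSystem_isNormal {p : ℕ} (hp : IsPGroup p S) (hp2 : 2 < p)
    (hαT : ∀ x ∈ T, α x = x⁻¹) (hαS : ∀ c, α c * c⁻¹ ∈ T) :
    IsNormal (inversionSystem T) (ofInvolutionTop α hα) p :=
  ofInvolution_isNormal _ _ hα _ (hp.to_subgroup T) hp2 le_top
    (fun x hx => hαT x hx ▸ T.inv_mem hx) ⟨α, .inr rfl, hαT, fun c _ => hαS c⟩

theorem trivialSystem_isNormal_of_isNormalizerSystem {p : ℕ} (hp : IsPGroup p S) (hp2 : 2 < p)
    (hαT : ∀ x ∈ T, α x = x⁻¹) {M : FusionSystem S}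
    (hM : (ofInvolutionTop α hα).IsNormalizerSystem T M) :
    IsNormal (trivialSystem S) M p := by
  rw [hM.unique (ofInvolution_isNormalizerSystem_self hα _ le_top
    fun x hx => hαT x hx ▸ T.inv_mem hx)]
  exact trivialSystem_isNormal hα hp hp2

theorem eq_ofInvolutionTop_of_isNormal_inversionSystem {p : ℕ} (hT : ∃ x ∈ T, x⁻¹ ≠ x)
    {X : FusionSystem S} (hXF : IsSubnormal X (ofInvolutionTop α hα) p)
    (hEX : IsNormal (inversionSystem T) X p)
    (hD : ∀ M, X.IsNormalizerSystem T M → IsSubnormal (trivialSystem S) M p) :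
    X = ofInvolutionTop α hα := by
  have hXT : X.T = ⊤ := top_le_iff.mp
    ((hD _ (isNormalizerSystem_normalizerSystem X T hEX.1.1)).isSubsystemOf.1.trans inf_le_right)
  have hinv : (inversionSystem T).IsMorIso T T invMonoidHom :=
    ⟨⟨le_rfl, _, .inr rfl, fun _ _ => rfl⟩, fun _ hx => T.inv_mem hx,
      fun y hy => ⟨y⁻¹, T.inv_mem hy, inv_inv y⟩⟩
  obtain ⟨fbar, hfbar, hfbar_inv, -⟩ := hEX.2.2.2.2.2 _ hinv
  rw [hXT, centralizer_eq_top_of_comm, top_inf_eq, sup_top_eq] at hfbar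
  obtain ⟨-, φ, hφ, hfφ⟩ := hXF.isSubsystemOf.2 _ _ hfbar
  obtain ⟨x, hxT, hx⟩ := hT
  rcases hφ with rfl | rfl
  · exact absurd ((hfbar_inv x hxT).symm.trans (hfφ x trivial)) hx
  · refine IsSubsystemOf.antisymm hXF.isSubsystemOf (ofInvolution_isSubsystemOf _ _ hXT.ge ?_)
    exact X.ext_mem ⊤ fbar hfbar φ fun x _ => (hfφ x trivial).symm

theorem isProductSystem_ofInvolutionTop {p : ℕ} (hp : IsPGroup p S) (hp2 : 2 < p)
    (hαT : ∀ x ∈ T, α x = x⁻¹) (hαS : ∀ c, α c * c⁻¹ ∈ T) (hT : ∃ x ∈ T, x⁻¹ ≠ x) :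
    IsProductSystem (ofInvolutionTop α hα) (inversionSystem T) (trivialSystem S) T p
      (ofInvolutionTop α hα) :=
  ⟨.refl, (sup_top_eq T).symm, inversionSystem_isNormal hα hp hp2 hαT hαS,
    fun _ hM => .single (trivialSystem_isNormal_of_isNormalizerSystem hα hp hp2 hαT hM),
    fun _ hXF hEX hD => eq_ofInvolutionTop_of_isNormal_inversionSystem hα hT hXF hEX hD ▸ .refl⟩

theorem not_feq_ofInvolutionTop {β : S →* S} (hβ : Involutive β) (hα1 : α ≠ MonoidHom.id S)
    (hαβ : α ≠ β) :
    ¬ FEq (ofInvolutionTop α hα) (ofInvolutionTop β hβ) := by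
  rintro ⟨-, hHom⟩
  obtain ⟨-, φ, hφ, hαφ⟩ := (hHom ⊤ α).mp ⟨le_rfl, α, .inr rfl, fun _ _ => rfl⟩
  obtain rfl : α = φ := MonoidHom.ext fun x => hαφ x trivial
  rcases hφ with rfl | rfl <;> contradiction

end TopInvolution

end FusionSystem

namespace ProductExample

open FusionSystem

abbrev V : Type u := ULift.{u} (Multiplicative (ZMod 3 × ZMod 3))

def negFst : V.{u} →* V.{u} :=
  MonoidHom.mk' (fun x => ⟨.ofAdd (-x.down.toAdd.1, x.down.toAdd.2)⟩) (by decide)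

def shearFst : V.{u} →* V.{u} :=
  MonoidHom.mk' (fun x => ⟨.ofAdd (x.down.toAdd.2 - x.down.toAdd.1, x.down.toAdd.2)⟩) (by decide)

def firstAxis : Subgroup V.{u} where
  carrier := {x | x.down.toAdd.2 = 0}
  one_mem' := rfl
  mul_mem' {x y} (hx : x.down.toAdd.2 = 0) (hy : y.down.toAdd.2 = 0) := by
    change x.down.toAdd.2 + y.down.toAdd.2 = 0
    rw [hx, hy, add_zero]
  inv_mem' {x} (hx : x.down.toAdd.2 = 0) := by
    change -x.down.toAdd.2 = 0
    rw [hx, neg_zero]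

theorem isPGroup_three : IsPGroup 3 V.{u} :=
  IsPGroup.of_card (n := 2) (by simp)

theorem negFst_involutive : Involutive negFst.{u} := by
  unfold Involutive
  decide

theorem shearFst_involutive : Involutive shearFst.{u} := by
  unfold Involutive
  decide

theorem negFst_eq_inv : ∀ x ∈ firstAxis.{u}, negFst x = x⁻¹ :=
  (by decide : ∀ x : V.{u}, x.down.toAdd.2 = 0 → negFst x = x⁻¹)

theorem shearFst_eq_inv : ∀ x ∈ firstAxis.{u}, shearFst x = x⁻¹ :=
  (by decide : ∀ x : V.{u}, x.down.toAdd.2 = 0 → shearFst x = x⁻¹)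

theorem negFst_mul_inv_mem (c : V.{u}) : negFst c * c⁻¹ ∈ firstAxis :=
  (by decide : ∀ c : V.{u}, (negFst c * c⁻¹).down.toAdd.2 = 0) c

theorem shearFst_mul_inv_mem (c : V.{u}) : shearFst c * c⁻¹ ∈ firstAxis :=
  (by decide : ∀ c : V.{u}, (shearFst c * c⁻¹).down.toAdd.2 = 0) c

theorem exists_mem_firstAxis_inv_ne : ∃ x ∈ firstAxis.{u}, x⁻¹ ≠ x :=
  ⟨⟨.ofAdd (1, 0)⟩, rfl, by decide⟩

theorem negFst_ne_id : negFst.{u} ≠ MonoidHom.id V :=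
  fun h => absurd (DFunLike.congr_fun h ⟨.ofAdd (1, 0)⟩) (by decide)

theorem negFst_ne_shearFst : negFst.{u} ≠ shearFst :=
  fun h => absurd (DFunLike.congr_fun h ⟨.ofAdd (0, 1)⟩) (by decide)

end ProductExample

open ProductExample

open FusionSystem in
/-- There exist a finite `p`-group `S`, distinct saturated
fusion systems `F ≠ G` over `S`, a subsystem `E` normal in both `F` and `G` over
some `T ≤ S`, and a subsystem `D` normal in both `N_F(T)` and `N_G(T)`, with
`(ED)_F = F` and `(ED)_G = G`: the product depends on the ambient system. -/
theorem product_depends_on_ambient : ∃ p : ℕ, p.Prime ∧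
    ∃ (Sb : GrpCat) (_ : Finite Sb), IsPGroup p Sb ∧
      ∃ F G E D : FusionSystem Sb, ∃ T : Subgroup Sb,
        F.T = ⊤ ∧ G.T = ⊤ ∧ F.IsSaturated p ∧ G.IsSaturated p ∧ ¬ FEq F G ∧
        IsNormal E F p ∧ IsNormal E G p ∧ E.T = T ∧
        (∀ M : FusionSystem Sb, F.IsNormalizerSystem T M → IsNormal D M p) ∧
        (∀ M : FusionSystem Sb, G.IsNormalizerSystem T M → IsNormal D M p) ∧
        IsProductSystem F E D T p F ∧ IsProductSystem G E D T p G := by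
  have h3 : 2 < 3 := by norm_num
  have hV := isPGroup_three
  exact ⟨3, Nat.prime_three, GrpCat.of V, inferInstanceAs (Finite V), hV, _, _, _, _, firstAxis,
    rfl, rfl, ofInvolution_isSaturated negFst_involutive _ (hV.to_subgroup ⊤) h3,
    ofInvolution_isSaturated shearFst_involutive _ (hV.to_subgroup ⊤) h3,
    not_feq_ofInvolutionTop negFst_involutive shearFst_involutive negFst_ne_id negFst_ne_shearFst,
    inversionSystem_isNormal negFst_involutive hV h3 negFst_eq_inv negFst_mul_inv_mem,
    inversionSystem_isNormal shearFst_involutive hV h3 shearFst_eq_inv shearFst_mul_inv_mem, rfl,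
    fun _ => trivialSystem_isNormal_of_isNormalizerSystem negFst_involutive hV h3 negFst_eq_inv,
    fun _ => trivialSystem_isNormal_of_isNormalizerSystem shearFst_involutive hV h3 shearFst_eq_inv,
    isProductSystem_ofInvolutionTop negFst_involutive hV h3 negFst_eq_inv negFst_mul_inv_mem
      exists_mem_firstAxis_inv_ne,
    isProductSystem_ofInvolutionTop shearFst_involutive hV h3 shearFst_eq_inv
      shearFst_mul_inv_mem exists_mem_firstAxis_inv_ne⟩
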